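/- For every real alpha >= 1 there exists a constant C_alpha < infinity (depending only on alpha, w, y, the parameter box, and the laws of U_0, V_0, but not on the parameter sequence) such that sup_{t>=0} max( E[W_t^alpha], E[Y_t^alpha] ) <= C_alpha. -/

import Mathlib

/-!
Freeze the rates at the worst corner of the box: waiting-time increments `V t / mu_l - U t / lam_u`
and age increments `U t / lam_l`. By monotonicity of the recursions this gives a pathwise larger
pair `(W', Y')` driven only by the i.i.d. inputs. With `a = 1 / mu_l < c < b = 1 / lam_u`,
the Lyapunov function `Z = exp (θ W' + θ lam_l (b - c) Y')` satisfies
`Z (t + 1) ≤ 1 + Z t * exp (θ (a V t - c U t))`, the factor being independent of `Z t`. Its mean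
`ρ(θ)` equals `1` at `θ = 0` with derivative `a - c < 0`, so `ρ(θ) < 1` for some small `θ > 0`
and then `E Z t ≤ E Z 0 + 1 / (1 - ρ)`. Finally `x ^ α ≤ (α / θ) ^ α exp (θ x)` for `x ≥ 0`.
-/

open MeasureTheory ProbabilityTheory Filter Topology Real

noncomputable def lindley (w : ℝ) (x : ℕ → ℝ) : ℕ → ℝ
  | 0 => w
  | t + 1 => max (lindley w x t + x t) 0

noncomputable def busyAge (y : ℝ) (L u : ℕ → ℝ) : ℕ → ℝ
  | 0 => y
  | t + 1 => if 0 < L (t + 1) then busyAge y L u t + u t else 0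

section Recursions

variable {w y : ℝ} {x x' u u' L L' : ℕ → ℝ}

lemma lindley_nonneg (hw : 0 ≤ w) : ∀ t, 0 ≤ lindley w x t
  | 0 => hw
  | _ + 1 => le_max_right _ _

lemma lindley_mono (hx : x ≤ x') : ∀ t, lindley w x t ≤ lindley w x' t
  | 0 => le_rfl
  | t + 1 => max_le_max_right 0 (add_le_add (lindley_mono hx t) (hx t))

lemma eq_lindley {W : ℕ → ℝ} (h0 : W 0 = w) (hW : ∀ t, W (t + 1) = max (W t + x t) 0) :
    W = lindley w x := by
  funext t
  induction t with
  | zero => exact h0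
  | succ t ih => rw [hW, ih, lindley]

lemma busyAge_nonneg (hy : 0 ≤ y) (hu : 0 ≤ u) : ∀ t, 0 ≤ busyAge y L u t
  | 0 => hy
  | t + 1 => by
    rw [busyAge]
    split_ifs
    · exact add_nonneg (busyAge_nonneg hy hu t) (hu t)
    · exact le_rfl

lemma busyAge_mono (hy : 0 ≤ y) (hL : L ≤ L') (hu : u ≤ u') (hu' : 0 ≤ u') :
    ∀ t, busyAge y L u t ≤ busyAge y L' u' t
  | 0 => le_rfl
  | t + 1 => by
    by_cases h : 0 < L (t + 1)
    · rw [busyAge, busyAge, if_pos h, if_pos (h.trans_le (hL _))]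
      exact add_le_add (busyAge_mono hy hL hu hu' t) (hu t)
    · rw [busyAge, if_neg h]
      exact busyAge_nonneg hy hu' _

lemma eq_busyAge {Y : ℕ → ℝ} (h0 : Y 0 = y)
    (hY : ∀ t, Y (t + 1) = if 0 < L (t + 1) then Y t + u t else 0) : Y = busyAge y L u := by
  funext t
  induction t with
  | zero => exact h0
  | succ t ih => rw [hY, ih, busyAge]

lemma exp_lindley_busyAge_succ_le (θ β : ℝ) (t : ℕ) :
    exp (θ * lindley w x (t + 1) + β * busyAge y (lindley w x) u (t + 1)) ≤
      1 + exp (θ * lindley w x t + β * busyAge y (lindley w x) u t) * exp (θ * x t + β * u t) := by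
  by_cases h : 0 < lindley w x (t + 1)
  · have hpos : 0 < lindley w x t + x t := (lt_max_iff.1 h).resolve_right (lt_irrefl 0)
    have hL : lindley w x (t + 1) = lindley w x t + x t := max_eq_left hpos.le
    rw [busyAge, if_pos h, hL, ← exp_add]
    exact (le_of_eq (by ring_nf)).trans (le_add_of_nonneg_left zero_le_one)
  · have hL : lindley w x (t + 1) = 0 := le_antisymm (not_lt.1 h) (le_max_right _ _)
    rw [busyAge, if_neg h, hL]
    simp only [mul_zero, add_zero, exp_zero, le_add_iff_nonneg_right]
    positivity

lemma nonneg_le_lindley_busyAge_of_rates {lo hi mlo : ℝ} {U V lam mu W Y : ℕ → ℝ}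
    (hw : 0 ≤ w) (hy : 0 ≤ y) (hU : 0 ≤ U) (hV : 0 ≤ V) (hlo : 0 < lo) (hmlo : 0 < mlo)
    (hlam : ∀ t, lam t ∈ Set.Icc lo hi) (hmu : ∀ t, mlo ≤ mu t) (hW0 : W 0 = w) (hY0 : Y 0 = y)
    (hW : ∀ t, W (t + 1) = max (W t + V t / mu t - U t / lam t) 0)
    (hY : ∀ t, Y (t + 1) = if 0 < W (t + 1) then Y t + U t / lam t else 0) (t : ℕ) :
    (0 ≤ W t ∧ W t ≤ lindley w (fun s => mlo⁻¹ * V s - hi⁻¹ * U s) t) ∧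
      (0 ≤ Y t ∧
        Y t ≤ busyAge y (lindley w fun s => mlo⁻¹ * V s - hi⁻¹ * U s) (fun s => U s / lo) t) := by
  have hlam0 : ∀ t, 0 < lam t := fun t => hlo.trans_le (hlam t).1
  have hWL : W = lindley w (fun s => V s / mu s - U s / lam s) :=
    eq_lindley hW0 fun t => by rw [hW, add_sub_assoc]
  have hYA : Y = busyAge y W (fun s => U s / lam s) := eq_busyAge hY0 hY
  have hx : (fun s => V s / mu s - U s / lam s) ≤ fun s => mlo⁻¹ * V s - hi⁻¹ * U s := by
    intro s
    show V s / mu s - U s / lam s ≤ mlo⁻¹ * V s - hi⁻¹ * U s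
    rw [inv_mul_eq_div, inv_mul_eq_div]
    exact sub_le_sub (div_le_div_of_nonneg_left (hV s) hmlo (hmu s))
      (div_le_div_of_nonneg_left (hU s) (hlam0 s) (hlam s).2)
  have hu : (fun s => U s / lam s) ≤ fun s => U s / lo := fun s =>
    div_le_div_of_nonneg_left (hU s) hlo (hlam s).1
  have hW_le : W ≤ lindley w fun s => mlo⁻¹ * V s - hi⁻¹ * U s := hWL ▸ lindley_mono hx
  refine ⟨⟨hWL ▸ lindley_nonneg hw t, hW_le t⟩, ⟨?_, ?_⟩⟩
  · exact hYA ▸ busyAge_nonneg hy (fun s => div_nonneg (hU s) (hlam0 s).le) t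
  · exact hYA ▸ busyAge_mono hy hW_le hu (fun s => div_nonneg (hU s) hlo.le) t

variable {Ω : Type*} {m : MeasurableSpace Ω}

lemma measurable_lindley {x : ℕ → Ω → ℝ} :
    ∀ {t}, (∀ s < t, Measurable[m] (x s)) → Measurable[m] fun ω => lindley w (fun s => x s ω) t
  | 0, _ => measurable_const
  | t + 1, hx => by
    simp only [lindley]
    exact ((measurable_lindley fun s hs => hx s (by omega)).add (hx t (by omega))).max
      measurable_const

lemma measurable_busyAge {L u : ℕ → Ω → ℝ} :
    ∀ {t}, (∀ s ≤ t, Measurable[m] (L s)) → (∀ s < t, Measurable[m] (u s)) →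
      Measurable[m] fun ω => busyAge y (fun s => L s ω) (fun s => u s ω) t
  | 0, _, _ => measurable_const
  | t + 1, hL, hu => by
    simp only [busyAge]
    exact Measurable.ite (measurableSet_lt measurable_const (hL _ le_rfl))
      ((measurable_busyAge (fun s hs => hL s (by omega)) fun s hs => hu s (by omega)).add
        (hu t (by omega))) measurable_const

end Recursions

lemma HasDerivAt.eventually_nhdsGT_lt {f : ℝ → ℝ} {f' x : ℝ} (hf : HasDerivAt f f' x)
    (hf' : f' < 0) : ∀ᶠ y in 𝓝[>] x, f y < f x := by
  have hslope : ∀ᶠ y in 𝓝[>] x, slope f x y < 0 :=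
    ((hasDerivAt_iff_tendsto_slope.1 hf).mono_left
      (nhdsWithin_mono _ fun y hy => ne_of_gt hy)).eventually (Iio_mem_nhds hf')
  filter_upwards [hslope, self_mem_nhdsWithin] with y hy hxy
  rw [slope_def_field, div_lt_iff₀ (sub_pos.2 hxy)] at hy
  linarith

section Probability

variable {Ω : Type*} {mΩ : MeasurableSpace Ω} {μ : Measure Ω}

lemma ProbabilityTheory.IdentDistrib.integrableExpSet_eq {Ω' : Type*} {mΩ' : MeasurableSpace Ω'}
    {ν : Measure Ω'} {X : Ω → ℝ} {Y : Ω' → ℝ} (h : IdentDistrib X Y μ ν) :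
    integrableExpSet X μ = integrableExpSet Y ν := by
  ext t
  exact (h.comp (measurable_const_mul t).exp).integrable_iff

lemma zero_mem_interior_integrableExpSet [IsFiniteMeasure μ] {X : Ω → ℝ} (hXm : Measurable X)
    (hX : ∀ ω, 0 ≤ X ω) {η : ℝ} (hη : 0 < η) (h : Integrable (fun ω => exp (η * X ω)) μ) :
    0 ∈ interior (integrableExpSet X μ) := by
  have hneg : Integrable (fun ω => exp (-1 * X ω)) μ := by
    refine (integrable_const (1 : ℝ)).mono' (hXm.const_mul _).exp.aestronglyMeasurable
      (ae_of_all _ fun ω => ?_)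
    rw [norm_of_nonneg (exp_pos _).le, exp_le_one_iff]
    linarith [hX ω]
  refine mem_interior_iff_mem_nhds.2 (mem_of_superset (Ioo_mem_nhds neg_one_lt_zero hη) ?_)
  exact fun t ht => integrable_exp_mul_of_le_of_le hneg h ht.1.le ht.2.le

lemma exists_mgf_mul_mgf_lt_one [IsProbabilityMeasure μ] {X Y : Ω → ℝ}
    (hX : 0 ∈ interior (integrableExpSet X μ)) (hY : 0 ∈ interior (integrableExpSet Y μ))
    {a c : ℝ} (hac : a * μ[X] < c * μ[Y]) :
    ∃ θ > 0, a * θ ∈ integrableExpSet X μ ∧ -c * θ ∈ integrableExpSet Y μ ∧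
      mgf X μ (a * θ) * mgf Y μ (-c * θ) < 1 := by
  have hdX : HasDerivAt (fun θ => mgf X μ (a * θ)) (μ[X] * a) 0 := by
    simpa [Function.comp_def] using
      (hasDerivAt_mgf hX).comp_of_eq 0 ((hasDerivAt_id (0 : ℝ)).const_mul a) (by simp)
  have hdY : HasDerivAt (fun θ => mgf Y μ (-c * θ)) (μ[Y] * -c) 0 := by
    simpa [Function.comp_def] using
      (hasDerivAt_mgf hY).comp_of_eq 0 ((hasDerivAt_id (0 : ℝ)).const_mul (-c)) (by simp)
  have hlt := (hdX.mul hdY).eventually_nhdsGT_lt (by simp; linarith)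
  have hint :
      ∀ᶠ θ in 𝓝 (0 : ℝ), a * θ ∈ integrableExpSet X μ ∧ -c * θ ∈ integrableExpSet Y μ :=
    (((continuous_const_mul a).tendsto' 0 0 (mul_zero a)).eventually
      (mem_interior_iff_mem_nhds.1 hX)).and
    (((continuous_const_mul (-c)).tendsto' 0 0 (mul_zero _)).eventually
      (mem_interior_iff_mem_nhds.1 hY))
  obtain ⟨θ, ⟨hθ1, hIX, hIY⟩, hθ⟩ :=
    ((hlt.and (nhdsWithin_le_nhds hint)).and self_mem_nhdsWithin).exists
  exact ⟨θ, hθ, hIX, hIY, by simpa using hθ1⟩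

lemma integral_le_of_le_one_add_mul [IsProbabilityMeasure μ] {Z G : ℕ → Ω → ℝ} {ρ : ℝ}
    (hρ : ρ < 1) (hZm : ∀ t, AEStronglyMeasurable (Z t) μ) (hZ0 : Integrable (Z 0) μ)
    (hZ : ∀ t ω, 0 ≤ Z t ω) (hG : ∀ t ω, 0 ≤ G t ω) (hGi : ∀ t, Integrable (G t) μ)
    (hGρ : ∀ t, ∫ ω, G t ω ∂μ ≤ ρ) (hind : ∀ t, IndepFun (Z t) (G t) μ)
    (hstep : ∀ t ω, Z (t + 1) ω ≤ 1 + Z t ω * G t ω) (t : ℕ) :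
    Integrable (Z t) μ ∧ ∫ ω, Z t ω ∂μ ≤ ∫ ω, Z 0 ω ∂μ + (1 - ρ)⁻¹ := by
  have hZ0nn : 0 ≤ ∫ ω, Z 0 ω ∂μ := integral_nonneg (hZ 0)
  have hinv : (1 - ρ)⁻¹ * (1 - ρ) = 1 := inv_mul_cancel₀ (sub_pos.2 hρ).ne'
  induction t with
  | zero => exact ⟨hZ0, le_add_of_nonneg_right (inv_nonneg.2 (sub_pos.2 hρ).le)⟩
  | succ t ih =>
    obtain ⟨hZi, hZle⟩ := ih
    have hZGi : Integrable (Z t * G t) μ := (hind t).integrable_mul hZi (hGi t)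
    have hdom : Integrable (fun ω => 1 + (Z t * G t) ω) μ := (integrable_const 1).add hZGi
    have hZi' : Integrable (Z (t + 1)) μ :=
      hdom.mono' (hZm _) (ae_of_all _ fun ω => (norm_of_nonneg (hZ _ ω)).trans_le (hstep t ω))
    refine ⟨hZi', ?_⟩
    calc ∫ ω, Z (t + 1) ω ∂μ ≤ ∫ ω, 1 + (Z t * G t) ω ∂μ := integral_mono hZi' hdom (hstep t)
      _ = 1 + (∫ ω, Z t ω ∂μ) * ∫ ω, G t ω ∂μ := by
        rw [integral_add (integrable_const 1) hZGi,
          (hind t).integral_mul_eq_mul_integral hZi.1 (hGi t).1]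
        simp
      _ ≤ 1 + (∫ ω, Z 0 ω ∂μ + (1 - ρ)⁻¹) * ρ := by
        grw [mul_le_mul hZle (hGρ t) (integral_nonneg (hG t)) (by positivity)]
      _ ≤ ∫ ω, Z 0 ω ∂μ + (1 - ρ)⁻¹ := by nlinarith

lemma ProbabilityTheory.iIndepFun.indepFun_of_measurable_iSup {ι : Type*} {f : ι → Ω → ℝ}
    (hf : iIndepFun f μ) (hfm : ∀ i, Measurable (f i)) {S T : Set ι} (hST : Disjoint S T)
    {X Y : Ω → ℝ}
    (hX : Measurable[⨆ i ∈ S, MeasurableSpace.comap (f i) inferInstance] X)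
    (hY : Measurable[⨆ i ∈ T, MeasurableSpace.comap (f i) inferInstance] Y) :
    IndepFun X Y μ := by
  rw [IndepFun_iff_Indep]
  exact indep_of_indep_of_le_right (indep_of_indep_of_le_left
    (indep_iSup_of_disjoint (fun i => measurable_iff_comap_le.1 (hfm i)) hf.iIndep hST)
    (measurable_iff_comap_le.1 hX)) (measurable_iff_comap_le.1 hY)

lemma measurable_iSup_comap {ι : Type*} (f : ι → Ω → ℝ) {S : Set ι} {i : ι} (hi : i ∈ S) :
    Measurable[⨆ j ∈ S, MeasurableSpace.comap (f j) inferInstance] (f i) :=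
  (comap_measurable (f i)).mono (le_iSup₂_of_le i hi le_rfl) le_rfl

lemma integral_rpow_le_of_exp_le {X Z : Ω → ℝ} {α θ : ℝ} (hα : 0 ≤ α) (hθ : 0 < θ)
    (hX : ∀ ω, 0 ≤ X ω) (hXZ : ∀ ω, exp (θ * X ω) ≤ Z ω) (hZ : Integrable Z μ) :
    ∫ ω, X ω ^ α ∂μ ≤ (α / θ) ^ α * ∫ ω, Z ω ∂μ := by
  rw [← integral_const_mul]
  refine integral_mono_of_nonneg (ae_of_all _ fun ω => rpow_nonneg (hX ω) α) (hZ.const_mul _)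
    (ae_of_all _ fun ω => ?_)
  have h := rpow_abs_le_mul_exp_abs (X ω) hα hθ.ne'
  rw [abs_of_nonneg (hX ω), abs_of_pos hθ] at h
  exact h.trans (mul_le_mul_of_nonneg_left (hXZ ω) (rpow_nonneg (div_nonneg hα hθ.le) α))

noncomputable def dominatingWait (w a b : ℝ) (U V : ℕ → Ω → ℝ) (t : ℕ) (ω : Ω) : ℝ :=
  lindley w (fun s => a * V s ω - b * U s ω) t

noncomputable def dominatingAge (w y a b k : ℝ) (U V : ℕ → Ω → ℝ) (t : ℕ) (ω : Ω) : ℝ :=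
  busyAge y (lindley w fun s => a * V s ω - b * U s ω) (fun s => U s ω / k) t

section Dominating

variable {w y a b c k : ℝ} {U V : ℕ → Ω → ℝ}

lemma measurable_dominatingWait {m : MeasurableSpace Ω} {t : ℕ}
    (hU : ∀ s < t, Measurable[m] (U s)) (hV : ∀ s < t, Measurable[m] (V s)) :
    Measurable[m] (dominatingWait w a b U V t) :=
  measurable_lindley fun s hs => ((hV s hs).const_mul a).sub ((hU s hs).const_mul b)

lemma measurable_dominatingAge {m : MeasurableSpace Ω} {t : ℕ}
    (hU : ∀ s < t, Measurable[m] (U s)) (hV : ∀ s < t, Measurable[m] (V s)) :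
    Measurable[m] (dominatingAge w y a b k U V t) :=
  measurable_busyAge
    (fun _ hs => measurable_dominatingWait (fun r hr => hU r (hr.trans_le hs))
      fun r hr => hV r (hr.trans_le hs))
    fun s hs => (hU s hs).div_const k

lemma exp_dominating_succ_le (hk : k ≠ 0) (θ : ℝ) (t : ℕ) (ω : Ω) :
    exp (θ * dominatingWait w a b U V (t + 1) ω +
        θ * k * (b - c) * dominatingAge w y a b k U V (t + 1) ω) ≤
      1 + exp (θ * dominatingWait w a b U V t ω +
        θ * k * (b - c) * dominatingAge w y a b k U V t ω) *
        (exp (a * θ * V t ω) * exp (-c * θ * U t ω)) := by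
  have h := exp_lindley_busyAge_succ_le (w := w) (y := y) (x := fun s => a * V s ω - b * U s ω)
    (u := fun s => U s ω / k) θ (θ * k * (b - c)) t
  rwa [← exp_add, show a * θ * V t ω + -c * θ * U t ω =
    θ * (a * V t ω - b * U t ω) + θ * k * (b - c) * (U t ω / k) by field_simp; ring]

lemma indepFun_exp_dominating [IsProbabilityMeasure μ] (hUm : ∀ n, Measurable (U n))
    (hVm : ∀ n, Measurable (V n)) (hindep : iIndepFun (fun i => Sum.elim U V i) μ)
    (θ β r s : ℝ) (t : ℕ) :
    IndepFun (fun ω => exp (θ * dominatingWait w a b U V t ω + β * dominatingAge w y a b k U V t ω))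
      (fun ω => exp (r * V t ω) * exp (s * U t ω)) μ := by
  -- `F S` is the σ-algebra generated by the `U n`, `V n` with `n ∈ S`.
  let F : Set ℕ → MeasurableSpace Ω := fun S =>
    ⨆ i ∈ Sum.elim id id ⁻¹' S, MeasurableSpace.comap (Sum.elim U V i) inferInstance
  have hUF {S : Set ℕ} {n : ℕ} (hn : n ∈ S) : Measurable[F S] (U n) :=
    measurable_iSup_comap (Sum.elim U V) (i := .inl n) hn
  have hVF {S : Set ℕ} {n : ℕ} (hn : n ∈ S) : Measurable[F S] (V n) :=
    measurable_iSup_comap (Sum.elim U V) (i := .inr n) hn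
  refine hindep.indepFun_of_measurable_iSup (fun i => i.rec hUm hVm)
    (S := Sum.elim id id ⁻¹' Set.Iio t)
    ((Set.disjoint_singleton_right.2 Set.self_notMem_Iio).preimage _) ?_ ?_
  · exact (((measurable_dominatingWait (fun _ hn => hUF hn) fun _ hn => hVF hn).const_mul θ).add
      ((measurable_dominatingAge (fun _ hn => hUF hn) fun _ hn => hVF hn).const_mul β)).exp
  · exact ((hVF (Set.mem_singleton t)).const_mul r).exp.mul
      ((hUF (Set.mem_singleton t)).const_mul s).exp

theorem exists_integral_exp_dominating_le [IsProbabilityMeasure μ]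
    (hUm : ∀ n, Measurable (U n)) (hVm : ∀ n, Measurable (V n))
    (hindep : iIndepFun (fun i => Sum.elim U V i) μ)
    (hUid : ∀ n, IdentDistrib (U n) (U 0) μ μ) (hVid : ∀ n, IdentDistrib (V n) (V 0) μ μ)
    (hU : 0 ∈ interior (integrableExpSet (U 0) μ)) (hV : 0 ∈ interior (integrableExpSet (V 0) μ))
    (hac : a * μ[V 0] < c * μ[U 0]) (hk : k ≠ 0) :
    ∃ θ > 0, ∃ D, ∀ t, Integrable (fun ω => exp (θ * dominatingWait w a b U V t ω +
        θ * k * (b - c) * dominatingAge w y a b k U V t ω)) μ ∧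
      ∫ ω, exp (θ * dominatingWait w a b U V t ω +
        θ * k * (b - c) * dominatingAge w y a b k U V t ω) ∂μ ≤ D := by
  obtain ⟨θ, hθ, hIV, hIU, hρ⟩ := exists_mgf_mul_mgf_lt_one hV hU hac
  have hUV (t : ℕ) :
      IndepFun (fun ω => exp (a * θ * V t ω)) (fun ω => exp (-c * θ * U t ω)) μ :=
    (hindep.indepFun (i := .inr t) (j := .inl t) (by simp)).exp_mul _ _
  have hIVt (t : ℕ) : a * θ ∈ integrableExpSet (V t) μ := (hVid t).integrableExpSet_eq ▸ hIV
  have hIUt (t : ℕ) : -c * θ ∈ integrableExpSet (U t) μ := (hUid t).integrableExpSet_eq ▸ hIU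
  have hGmean (t : ℕ) : ∫ ω, exp (a * θ * V t ω) * exp (-c * θ * U t ω) ∂μ =
      mgf (V 0) μ (a * θ) * mgf (U 0) μ (-c * θ) := by
    rw [← mgf_congr_of_identDistrib _ _ (hVid t), ← mgf_congr_of_identDistrib _ _ (hUid t)]
    exact (hUV t).integral_mul_eq_mul_integral (hIVt t).1 (hIUt t).1
  exact ⟨θ, hθ, _, integral_le_of_le_one_add_mul hρ
    (fun t => (((measurable_dominatingWait (fun n _ => hUm n) fun n _ => hVm n).const_mul θ).add
      ((measurable_dominatingAge (fun n _ => hUm n) fun n _ => hVm n).const_mul _)).exp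
      |>.aestronglyMeasurable)
    (integrable_const (exp (θ * w + θ * k * (b - c) * y))) (fun t ω => (exp_pos _).le)
    (fun t ω => (mul_pos (exp_pos _) (exp_pos _)).le)
    (fun t => (hUV t).integrable_mul (hIVt t) (hIUt t))
    (fun t => (hGmean t).le) (fun t => indepFun_exp_dominating hUm hVm hindep _ _ _ _ t)
    (fun t ω => exp_dominating_succ_le hk θ t ω)⟩

end Dominating

end Probability

theorem stmt6_general
    {Ω : Type*} [MeasureSpace Ω] [IsProbabilityMeasure (ℙ : Measure Ω)]
    (U V : ℕ → Ω → ℝ)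
    (hUmeas : ∀ n, Measurable (U n)) (hVmeas : ∀ n, Measurable (V n))
    (hindep : iIndepFun
      (fun i : ℕ ⊕ ℕ => Sum.elim U V i) ℙ)
    (hUnonneg : ∀ n ω, 0 ≤ U n ω) (hVnonneg : ∀ n ω, 0 ≤ V n ω)
    (hUid : ∀ n, IdentDistrib (U n) (U 0) ℙ ℙ)
    (hVid : ∀ n, IdentDistrib (V n) (V 0) ℙ ℙ)
    (hUmean : ∫ ω, U 0 ω ∂ℙ = 1) (hVmean : ∫ ω, V 0 ω ∂ℙ = 1)
    (η : ℝ) (hη : 0 < η)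
    (hUexp : Integrable (fun ω => Real.exp (η * U 0 ω)) ℙ)
    (hVexp : Integrable (fun ω => Real.exp (η * V 0 ω)) ℙ)
    (lam_l lam_u mu_l mu_u : ℝ)
    (hlam_l : 0 < lam_l) (hlam : lam_l ≤ lam_u) (hstab : lam_u < mu_l)
    (w y : ℝ) (hw : 0 ≤ w) (hy : 0 ≤ y) :
    ∀ α : ℝ, 1 ≤ α →
      ∃ C : ℝ,
        ∀ lamSeq muSeq : ℕ → Ω → ℝ,
          (∀ t, Measurable (lamSeq t)) → (∀ t, Measurable (muSeq t)) →
          (∀ t ω, lamSeq t ω ∈ Set.Icc lam_l lam_u) →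
          (∀ t ω, muSeq t ω ∈ Set.Icc mu_l mu_u) →
          ∀ W Y : ℕ → Ω → ℝ,
            (∀ t, Measurable (W t)) → (∀ t, Measurable (Y t)) →
            (∀ ω, W 0 ω = w) → (∀ ω, Y 0 ω = y) →
            (∀ t ω, W (t + 1) ω =
              max (W t ω + V t ω / muSeq t ω - U t ω / lamSeq t ω) 0) →
            (∀ t ω, Y (t + 1) ω =
              if 0 < W (t + 1) ω then Y t ω + U t ω / lamSeq t ω else 0) →
            ∀ t : ℕ,
              (∫ ω, W t ω ^ α ∂ℙ) ≤ C ∧ (∫ ω, Y t ω ^ α ∂ℙ) ≤ C := by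
  intro α hα
  have hlu : 0 < lam_u := hlam_l.trans_le hlam
  have hml : 0 < mu_l := hlu.trans hstab
  set a := mu_l⁻¹
  set b := lam_u⁻¹
  have hab : a < b := inv_strictAnti₀ hlu hstab
  obtain ⟨θ, hθ, D, hZ⟩ := exists_integral_exp_dominating_le (w := w) (y := y) (a := a) (b := b)
    (c := (a + b) / 2) hUmeas hVmeas hindep hUid hVid
    (zero_mem_interior_integrableExpSet (hUmeas 0) (hUnonneg 0) hη hUexp)
    (zero_mem_interior_integrableExpSet (hVmeas 0) (hVnonneg 0) hη hVexp)
    (by rw [hUmean, hVmean]; linarith) hlam_l.ne'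
  set β := θ * lam_l * (b - (a + b) / 2)
  have hβ : 0 < β := mul_pos (by positivity) (by linarith)
  refine ⟨max ((α / θ) ^ α * D) ((α / β) ^ α * D),
    fun lamSeq muSeq _ _ hlamBox hmuBox W Y _ _ hW0 hY0 hWrec hYrec t => ?_⟩
  have hcmp (ω : Ω) : (0 ≤ W t ω ∧ W t ω ≤ dominatingWait w a b U V t ω) ∧
      (0 ≤ Y t ω ∧ Y t ω ≤ dominatingAge w y a b lam_l U V t ω) :=
    nonneg_le_lindley_busyAge_of_rates (W := fun s => W s ω) (Y := fun s => Y s ω) hw hy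
      (fun s => hUnonneg s ω) (fun s => hVnonneg s ω) hlam_l hml (fun s => hlamBox s ω)
      (fun s => (hmuBox s ω).1) (hW0 ω) (hY0 ω) (fun s => hWrec s ω) (fun s => hYrec s ω) t
  obtain ⟨hZi, hZD⟩ := hZ t
  have hα0 : 0 ≤ α := by linarith
  constructor
  · refine (integral_rpow_le_of_exp_le hα0 hθ (fun ω => (hcmp ω).1.1)
      (fun ω => exp_le_exp.2 ?_) hZi).trans ?_
    · nlinarith [hcmp ω]
    · exact (mul_le_mul_of_nonneg_left hZD (by positivity)).trans (le_max_left _ _)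
  · refine (integral_rpow_le_of_exp_le hα0 hβ (fun ω => (hcmp ω).2.1)
      (fun ω => exp_le_exp.2 ?_) hZi).trans ?_
    · nlinarith [hcmp ω]
    · exact (mul_le_mul_of_nonneg_left hZD (by positivity)).trans (le_max_right _ _)

/-- uniformly bounded moments of all orders `α ≥ 1` for the GI/GI/1
waiting-time and observed-busy-period processes driven by an arbitrary
(box-constrained) random parameter sequence. -/
theorem stmt6
    {Ω : Type*} [MeasureSpace Ω] [IsProbabilityMeasure (ℙ : Measure Ω)]
    (U V : ℕ → Ω → ℝ)
    (hUmeas : ∀ n, Measurable (U n)) (hVmeas : ∀ n, Measurable (V n))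
    (hindep : iIndepFun
      (fun i : ℕ ⊕ ℕ => Sum.elim U V i) ℙ)
    (hUnonneg : ∀ n ω, 0 ≤ U n ω) (hVnonneg : ∀ n ω, 0 ≤ V n ω)
    (hUid : ∀ n, IdentDistrib (U n) (U 0) ℙ ℙ)
    (hVid : ∀ n, IdentDistrib (V n) (V 0) ℙ ℙ)
    (hUmean : ∫ ω, U 0 ω ∂ℙ = 1) (hVmean : ∫ ω, V 0 ω ∂ℙ = 1)
    (η : ℝ) (hη : 0 < η)
    (hUexp : Integrable (fun ω => Real.exp (η * U 0 ω)) ℙ)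
    (hVexp : Integrable (fun ω => Real.exp (η * V 0 ω)) ℙ)
    (lam_l lam_u mu_l mu_u : ℝ)
    (hlam_l : 0 < lam_l) (hlam : lam_l ≤ lam_u) (hstab : lam_u < mu_l)
    (hmu : mu_l ≤ mu_u)
    (w y : ℝ) (hw : 0 ≤ w) (hy : 0 ≤ y) :
    ∀ α : ℝ, 1 ≤ α →
      ∃ C : ℝ,
        ∀ lamSeq muSeq : ℕ → Ω → ℝ,
          (∀ t, Measurable (lamSeq t)) → (∀ t, Measurable (muSeq t)) →
          (∀ t ω, lamSeq t ω ∈ Set.Icc lam_l lam_u) →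
          (∀ t ω, muSeq t ω ∈ Set.Icc mu_l mu_u) →
          ∀ W Y : ℕ → Ω → ℝ,
            (∀ t, Measurable (W t)) → (∀ t, Measurable (Y t)) →
            (∀ ω, W 0 ω = w) → (∀ ω, Y 0 ω = y) →
            (∀ t ω, W (t + 1) ω =
              max (W t ω + V t ω / muSeq t ω - U t ω / lamSeq t ω) 0) →
            (∀ t ω, Y (t + 1) ω =
              if 0 < W (t + 1) ω then Y t ω + U t ω / lamSeq t ω else 0) →
            ∀ t : ℕ,
              (∫ ω, W t ω ^ α ∂ℙ) ≤ C ∧ (∫ ω, Y t ω ^ α ∂ℙ) ≤ C :=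
  stmt6_general U V hUmeas hVmeas hindep hUnonneg hVnonneg hUid hVid hUmean hVmean η hη hUexp hVexp
    lam_l lam_u mu_l mu_u hlam_l hlam hstab w y hw hy
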